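/- Let x be a real number with 0 < x ≤ 1 and let l ≥ 2 be an integer, and set λ = l(l+1). Then there is no real number α satisfying both α(λ-4) = -4xα - 8(1-x) and λ - 1 = -3 + ((2-λ)/2)α. -/

import Mathlib

/-!
Eliminating `α` from the two equations leaves `λ (λ - 6 + 8x) = 0`, which is impossible since
`λ = l(l+1) ≥ 6` and `x > 0`.
-/

def IsFirstOrderDeformation {K : Type*} [Field K] (x lam α : K) : Prop :=
  α * (lam - 4) = -4 * x * α - 8 * (1 - x) ∧ lam - 1 = -3 + ((2 - lam) / 2) * α

theorem IsFirstOrderDeformation.mul_sub_six_add_eight_mul_eq_zero {K : Type*} [Field K]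
    [CharZero K] {x lam α : K} (h : IsFirstOrderDeformation x lam α) : lam * (lam - 6 + 8 * x) = 0 := by
  obtain ⟨h₁, h₂⟩ := h
  linear_combination (lam - 4 + 4 * x) * h₂ + (2 - lam) / 2 * h₁

theorem six_le_mul_add_one {l : ℤ} (hl : 2 ≤ l) : (6 : ℝ) ≤ l * (l + 1) := by
  have hl' : (2 : ℝ) ≤ l := by exact_mod_cast hl
  nlinarith

theorem first_order_no_nontrivial_deformation (x : ℝ) (hx0 : 0 < x)
    (l : ℤ) (hl : 2 ≤ l) (lam : ℝ) (hlam : lam = (l : ℝ) * ((l : ℝ) + 1)) :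
    ¬ ∃ α : ℝ, α * (lam - 4) = -4 * x * α - 8 * (1 - x) ∧
      lam - 1 = -3 + ((2 - lam) / 2) * α := by
  rintro ⟨α, hα⟩
  have hprod : lam * (lam - 6 + 8 * x) = 0 :=
    IsFirstOrderDeformation.mul_sub_six_add_eight_mul_eq_zero hα
  have hlam6 : 6 ≤ lam := hlam ▸ six_le_mul_add_one hl
  have hpos : 0 < lam * (lam - 6 + 8 * x) := mul_pos (by linarith) (by linarith)
  exact hpos.ne' hprod
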